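/- arXiv:2102.04971 — 4 statements merged into one kernel-verified Lean document; each statement's English description precedes it below -/
import Mathlib

section
/- If Ω, Γ, W are non-empty, compact, convex subsets of ℝⁿ with 0 ∈ W, then the Hausdorff distance between conv(Ω ∪ (Γ + W)) and W + conv(Ω ∪ Γ) does not exceed ‖W‖, where ‖W‖ = sup_{x ∈ W} ‖x‖. -/
open Pointwise

theorem hausdorffDist_convexHull_union_add_le {n : ℕ} (Ω Γ W : Set (Fin n → ℝ))
    (hΩne : Ω.Nonempty) (hΓne : Γ.Nonempty) (hWne : W.Nonempty)
    (hΩc : IsCompact Ω) (hΓc : IsCompact Γ) (hWc : IsCompact W)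
    (hΩ : Convex ℝ Ω) (hΓ : Convex ℝ Γ) (hW : Convex ℝ W)
    (h0 : (0 : Fin n → ℝ) ∈ W) :
    Metric.hausdorffDist (convexHull ℝ (Ω ∪ (Γ + W))) (W + convexHull ℝ (Ω ∪ Γ))
      ≤ sSup ((fun x => ‖x‖) '' W) := by
  set M := sSup ((fun x => ‖x‖) '' W) with hM
  have hbdd : BddAbove ((fun x => ‖x‖) '' W) :=
    (hWc.image continuous_norm).bddAbove
  have hle : ∀ w ∈ W, ‖w‖ ≤ M := fun w hw => le_csSup hbdd ⟨w, hw, rfl⟩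
  have hM0 : 0 ≤ M := by simpa using hle 0 h0
  -- A ⊆ B
  have hAB : convexHull ℝ (Ω ∪ (Γ + W)) ⊆ W + convexHull ℝ (Ω ∪ Γ) := by
    apply convexHull_min _ (hW.add (convex_convexHull ℝ _))
    rintro x (hx | hx)
    · exact ⟨0, h0, x, subset_convexHull ℝ _ (Or.inl hx), by simp⟩
    · rcases hx with ⟨g, hg, w, hw, rfl⟩
      exact ⟨w, hw, g, subset_convexHull ℝ _ (Or.inr hg), by
        simp [add_comm]⟩
  have hconv : convexHull ℝ (Ω ∪ Γ) ⊆ convexHull ℝ (Ω ∪ (Γ + W)) := by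
    apply convexHull_mono
    rintro x (hx | hx)
    · exact Or.inl hx
    · exact Or.inr ⟨x, hx, 0, h0, by simp⟩
  apply Metric.hausdorffDist_le_of_mem_dist hM0
  · intro x hx
    exact ⟨x, hAB hx, by simp [hM0]⟩
  · rintro x ⟨w, hw, y, hy, rfl⟩
    refine ⟨y, hconv hy, ?_⟩
    have : dist (w + y) y = ‖w‖ := by
      rw [dist_eq_norm]; simp
    rw [this]; exact hle w hw
end

section
/- Let b, c ∈ ℝⁿ and F, G ∈ ℝ^{n×p}. Then conv(Z(b,F) ∪ Z(c,G)) ⊆ Z((b+c)/2, ((F+G)/2, (b−c)/2, (F−G)/2)), where the latter zonotope has 2p+1 generators given by the columns of (F+G)/2, the vector (b−c)/2, and the columns of (F−G)/2. -/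
/-- The zonotope with center `c` and generators the columns of `G`. -/
def zonotope {n : ℕ} {ι : Type*} [Fintype ι] (c : Fin n → ℝ)
    (G : Matrix (Fin n) ι ℝ) : Set (Fin n → ℝ) :=
  {x | ∃ lam : ι → ℝ, (∀ j, |lam j| ≤ 1) ∧ x = c + G.mulVec lam}

/-- The generator matrix `((F+G)/2, (b−c)/2, (F−G)/2)` of the enclosing zonotope. -/
noncomputable def enclosureMatrix {n p : ℕ} (b c : Fin n → ℝ) (F G : Matrix (Fin n) (Fin p) ℝ) :
    Matrix (Fin n) (Fin p ⊕ (Unit ⊕ Fin p)) ℝ :=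
  Matrix.of fun i j =>
    Sum.elim (fun k => (F i k + G i k) / 2)
      (Sum.elim (fun _ => (b i - c i) / 2) (fun k => (F i k - G i k) / 2)) j

theorem convexHull_union_zonotopes_subset_enclosure {n p : ℕ} (b c : Fin n → ℝ)
    (F G : Matrix (Fin n) (Fin p) ℝ) :
    convexHull ℝ (zonotope b F ∪ zonotope c G)
      ⊆ zonotope ((1 / 2 : ℝ) • (b + c)) (enclosureMatrix b c F G) := by
  have hconv : Convex ℝ (zonotope ((1 / 2 : ℝ) • (b + c)) (enclosureMatrix b c F G)) := by
    rintro x ⟨l, hl, rfl⟩ y ⟨m, hm, rfl⟩ s t hs ht hst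
    refine ⟨s • l + t • m, fun j => ?_, ?_⟩
    · calc |(s • l + t • m) j| = |s * l j + t * m j| := rfl
        _ ≤ |s * l j| + |t * m j| := abs_add_le _ _
        _ = s * |l j| + t * |m j| := by
            rw [abs_mul, abs_mul, abs_of_nonneg hs, abs_of_nonneg ht]
        _ ≤ s * 1 + t * 1 := by
            gcongr
            exacts [hl j, hm j]
        _ = 1 := by linarith
    · funext i
      simp only [Pi.add_apply, Pi.smul_apply, smul_eq_mul, Matrix.mulVec, dotProduct,
        mul_add, Finset.mul_sum]
      rw [Finset.sum_add_distrib]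
      have e1 : ∑ x, enclosureMatrix b c F G i x * (s * l x)
          = s * ∑ x, enclosureMatrix b c F G i x * l x := by
        rw [Finset.mul_sum]; exact Finset.sum_congr rfl fun x _ => by ring
      have e2 : ∑ x, enclosureMatrix b c F G i x * (t * m x)
          = t * ∑ x, enclosureMatrix b c F G i x * m x := by
        rw [Finset.mul_sum]; exact Finset.sum_congr rfl fun x _ => by ring
      have e3 : ∑ x, s * (enclosureMatrix b c F G i x * l x)
          = s * ∑ x, enclosureMatrix b c F G i x * l x := (Finset.mul_sum _ _ _).symm
      have e4 : ∑ x, t * (enclosureMatrix b c F G i x * m x)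
          = t * ∑ x, enclosureMatrix b c F G i x * m x := (Finset.mul_sum _ _ _).symm
      rw [e1, e2, e3, e4]
      linear_combination ((1/2 : ℝ) * b i + (1/2 : ℝ) * c i) * hst
  refine convexHull_min ?_ hconv
  rintro x (⟨l, hl, rfl⟩ | ⟨l, hl, rfl⟩)
  · refine ⟨Sum.elim l (Sum.elim (fun _ => 1) l), ?_, ?_⟩
    · rintro (j | j | j)
      · simpa using hl j
      · simp
      · simpa using hl j
    · funext i
      simp only [Pi.add_apply, Pi.smul_apply, smul_eq_mul, Matrix.mulVec, dotProduct,
        Fintype.sum_sum_type, enclosureMatrix, Matrix.of_apply, Sum.elim_inl, Sum.elim_inr]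
      simp only [Finset.univ_unique, Finset.sum_singleton]
      have hsum : ∑ x, (F i x + G i x) / 2 * l x + ∑ x, (F i x - G i x) / 2 * l x
          = ∑ x, F i x * l x := by
        rw [← Finset.sum_add_distrib]; exact Finset.sum_congr rfl fun x _ => by ring
      linear_combination -hsum
  · refine ⟨Sum.elim l (Sum.elim (fun _ => -1) (-l)), ?_, ?_⟩
    · rintro (j | j | j)
      · simpa using hl j
      · simp
      · simpa using hl j
    · funext i
      simp only [Pi.add_apply, Pi.smul_apply, smul_eq_mul, Matrix.mulVec, dotProduct,
        Fintype.sum_sum_type, enclosureMatrix, Matrix.of_apply, Sum.elim_inl, Sum.elim_inr,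
        Pi.neg_apply]
      simp only [Finset.univ_unique, Finset.sum_singleton]
      have hsum : ∑ x, (F i x + G i x) / 2 * l x + ∑ x, (F i x - G i x) / 2 * (-l x)
          = ∑ x, G i x * l x := by
        rw [← Finset.sum_add_distrib]; exact Finset.sum_congr rfl fun x _ => by ring
      linear_combination -hsum
end

section
/- Let b, c ∈ ℝⁿ and F, G ∈ ℝ^{n×p}. Then the Hausdorff distance between conv(Z(b,F) ∪ Z(c,G)) and the enclosing zonotope Z((b+c)/2, ((F+G)/2, (b−c)/2, (F−G)/2)) does not exceed ‖F − G‖, where the matrix norm is taken with respect to the maximum norm on the domain. -/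
/-- The operator norm of a matrix w.r.t. the maximum norm on the domain and the
norm on `Fin n → ℝ` on the codomain. -/
noncomputable def matrixOpNorm {n p : ℕ} (A : Matrix (Fin n) (Fin p) ℝ) : ℝ :=
  sSup ((fun x => ‖A.mulVec x‖) '' {x : Fin p → ℝ | ‖x‖ ≤ 1})

open Matrix

section matrixOpNorm

variable {n p : ℕ}

lemma bddAbove_norm_mulVec_closedBall (A : Matrix (Fin n) (Fin p) ℝ) :
    BddAbove ((fun x => ‖A *ᵥ x‖) '' {x : Fin p → ℝ | ‖x‖ ≤ 1}) := by
  have hball : {x : Fin p → ℝ | ‖x‖ ≤ 1} = Metric.closedBall 0 1 := by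
    ext x; simp
  rw [hball]
  exact ((isCompact_closedBall _ _).image
    (A.mulVecLin.continuous_of_finiteDimensional.norm)).bddAbove

lemma norm_mulVec_le_matrixOpNorm (A : Matrix (Fin n) (Fin p) ℝ) {x : Fin p → ℝ}
    (hx : ‖x‖ ≤ 1) : ‖A *ᵥ x‖ ≤ matrixOpNorm A :=
  le_csSup (bddAbove_norm_mulVec_closedBall A) ⟨x, hx, rfl⟩

lemma matrixOpNorm_nonneg (A : Matrix (Fin n) (Fin p) ℝ) : 0 ≤ matrixOpNorm A :=
  (norm_nonneg _).trans (norm_mulVec_le_matrixOpNorm A (x := 0) (by simp))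

end matrixOpNorm

lemma convex_zonotope {n : ℕ} {ι : Type*} [Fintype ι] (c : Fin n → ℝ) (G : Matrix (Fin n) ι ℝ) :
    Convex ℝ (zonotope c G) := by
  rintro _ ⟨l₁, hl₁, rfl⟩ _ ⟨l₂, hl₂, rfl⟩ s t hs ht hst
  refine ⟨s • l₁ + t • l₂, fun j => ?_, ?_⟩
  · calc |s * l₁ j + t * l₂ j| ≤ s * |l₁ j| + t * |l₂ j| := by
          simpa [abs_mul, abs_of_nonneg hs, abs_of_nonneg ht] using abs_add_le (s * l₁ j) (t * l₂ j)
      _ ≤ s * 1 + t * 1 := by gcongr <;> simp [hl₁, hl₂]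
      _ = 1 := by linarith
  · rw [mulVec_add, mulVec_smul, mulVec_smul]
    match_scalars <;> linarith

lemma norm_half_smul_sub_smul_le_one {E : Type*} [SeminormedAddCommGroup E] [NormedSpace ℝ E]
    {u v : E} {μ : ℝ} (hu : ‖u‖ ≤ 1) (hv : ‖v‖ ≤ 1) (hμ : |μ| ≤ 1) :
    ‖(1 / 2 : ℝ) • (v - μ • u)‖ ≤ 1 := by
  have hμu : ‖μ • u‖ ≤ 1 := by
    rw [norm_smul, Real.norm_eq_abs]
    nlinarith [abs_nonneg μ, norm_nonneg u]
  rw [norm_smul, Real.norm_of_nonneg (by norm_num)]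
  linarith [norm_sub_le v (μ • u)]

section enclosure

variable {n p : ℕ} (b c : Fin n → ℝ) (F G : Matrix (Fin n) (Fin p) ℝ)

lemma enclosureMatrix_mulVec_sumElim (lam₁ : Fin p → ℝ) (μ : Unit → ℝ) (lam₂ : Fin p → ℝ) :
    enclosureMatrix b c F G *ᵥ Sum.elim lam₁ (Sum.elim μ lam₂)
      = (1 / 2 : ℝ) • ((F + G) *ᵥ lam₁ + μ () • (b - c) + (F - G) *ᵥ lam₂) := by
  ext i
  simp only [enclosureMatrix, mulVec, dotProduct, Fintype.sum_sum_type, of_apply, Sum.elim_inl,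
    Sum.elim_inr, Pi.smul_apply, Pi.add_apply, Pi.sub_apply, Matrix.add_apply, Matrix.sub_apply,
    Fintype.sum_unique, smul_eq_mul, add_mul, sub_mul, div_mul_eq_mul_div, ← Finset.sum_div,
    Finset.sum_add_distrib, Finset.sum_sub_distrib]
  ring

lemma union_zonotope_subset_enclosure :
    zonotope b F ∪ zonotope c G ⊆ zonotope ((1 / 2 : ℝ) • (b + c)) (enclosureMatrix b c F G) := by
  rintro _ (⟨lam, hlam, rfl⟩ | ⟨lam, hlam, rfl⟩)
  · refine ⟨Sum.elim lam (Sum.elim (fun _ => 1) lam), by rintro (j | j | j) <;> simp [hlam], ?_⟩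
    rw [enclosureMatrix_mulVec_sumElim, add_mulVec, sub_mulVec]
    match_scalars <;> ring
  · refine ⟨Sum.elim lam (Sum.elim (fun _ => -1) (-lam)), by rintro (j | j | j) <;> simp [hlam], ?_⟩
    rw [enclosureMatrix_mulVec_sumElim, add_mulVec, sub_mulVec, mulVec_neg, mulVec_neg]
    match_scalars <;> ring

lemma exists_mem_convexHull_dist_le_of_mem_enclosure {y : Fin n → ℝ}
    (hy : y ∈ zonotope ((1 / 2 : ℝ) • (b + c)) (enclosureMatrix b c F G)) :
    ∃ x ∈ convexHull ℝ (zonotope b F ∪ zonotope c G), dist y x ≤ matrixOpNorm (F - G) := by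
  obtain ⟨lam, hlam, rfl⟩ := hy
  set lam₁ : Fin p → ℝ := fun k => lam (.inl k)
  set μ : ℝ := lam (.inr (.inl ()))
  set lam₂ : Fin p → ℝ := fun k => lam (.inr (.inr k))
  have hlam_eq : lam = Sum.elim lam₁ (Sum.elim (fun _ => μ) lam₂) := by
    ext (k | ⟨⟩ | k) <;> rfl
  have hunit : ∀ {v : Fin p → ℝ}, (∀ k, |v k| ≤ 1) → ‖v‖ ≤ 1 := fun h =>
    (pi_norm_le_iff_of_nonneg zero_le_one).2 fun k => (Real.norm_eq_abs _).trans_le (h k)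
  have hμ : |μ| ≤ 1 := hlam _
  refine ⟨((1 + μ) / 2) • (b + F *ᵥ lam₁) + ((1 - μ) / 2) • (c + G *ᵥ lam₁),
    convex_convexHull ℝ _ (subset_convexHull ℝ _ (.inl ⟨lam₁, fun _ => hlam _, rfl⟩))
      (subset_convexHull ℝ _ (.inr ⟨lam₁, fun _ => hlam _, rfl⟩))
      (by linarith [(abs_le.1 hμ).1]) (by linarith [(abs_le.1 hμ).2]) (by ring), ?_⟩
  have hdiff : (1 / 2 : ℝ) • (b + c) + enclosureMatrix b c F G *ᵥ lam
      - (((1 + μ) / 2) • (b + F *ᵥ lam₁) + ((1 - μ) / 2) • (c + G *ᵥ lam₁))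
      = (F - G) *ᵥ ((1 / 2 : ℝ) • (lam₂ - μ • lam₁)) := by
    rw [hlam_eq, enclosureMatrix_mulVec_sumElim, mulVec_smul, mulVec_sub, mulVec_smul,
      add_mulVec, sub_mulVec, sub_mulVec]
    match_scalars <;> ring
  rw [dist_eq_norm, hdiff]
  exact norm_mulVec_le_matrixOpNorm _
    (norm_half_smul_sub_smul_le_one (hunit fun _ => hlam _) (hunit fun _ => hlam _) hμ)

end enclosure

theorem hausdorffDist_convexHull_enclosure_le {n p : ℕ} (b c : Fin n → ℝ)
    (F G : Matrix (Fin n) (Fin p) ℝ) :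
    Metric.hausdorffDist (convexHull ℝ (zonotope b F ∪ zonotope c G))
        (zonotope ((1 / 2 : ℝ) • (b + c)) (enclosureMatrix b c F G))
      ≤ matrixOpNorm (F - G) := by
  have hsub : convexHull ℝ (zonotope b F ∪ zonotope c G) ⊆
      zonotope ((1 / 2 : ℝ) • (b + c)) (enclosureMatrix b c F G) :=
    convexHull_min (union_zonotope_subset_enclosure b c F G) (convex_zonotope _ _)
  refine Metric.hausdorffDist_le_of_mem_dist (matrixOpNorm_nonneg _) (fun x hx => ?_)
    (fun y hy => exists_mem_convexHull_dist_le_of_mem_enclosure b c F G hy)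
  exact ⟨x, hsub hx, (dist_self x).trans_le (matrixOpNorm_nonneg _)⟩
end

section
/- Let A: [t₀,t_f] → ℝ^{n×n} be of class C¹ with ‖A(t)‖ ≤ M_A > 0 and ‖Ȧ(t)‖ ≤ M_{Ȧ} for all t, and let φ be the associated transition matrix. Fix a < b in [t₀,t_f] and define ψ(t,a,b) = I + (φ(b,a) − I)(t−a)/(b−a). Then for all t ∈ [a,b], ‖φ(t,a) − ψ(t,a,b)‖ ≤ ((t−a)/(b−a)) · γ(b−a), where γ(s) = (e^{s M_A} − 1 − s M_A)(1 + M_{Ȧ}/M_A²). -/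
/-!
Write `φ(t)` for `φ(t, a)` and `L = (t - a)/(b - a)`. The left-hand side is the error of linear
interpolation of `φ` between `a` and `b`. Expanding `φ(a)` and `φ(b)` to first order around `t`
and combining the expansions with weights `1 - L` and `L` cancels the first-order terms, so the
error is at most the same combination of the two Taylor remainders. Each remainder is dominated
by the corresponding remainder of any real `u` with `u'' ≥ ‖φ''‖`. Since `φ'' = A'φ + A²φ` and
`‖φ(τ)‖ ≤ exp (M_A (τ - a))` by Grönwall, `u(τ) = (1 + M_Ȧ/M_A²) exp (M_A (τ - a))` qualifies, and
its interpolation error is at most `L γ(b - a)` because `1 + x ≤ exp x`.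
-/

open Set

section Interpolation

variable {F : Type*} [NormedAddCommGroup F] [NormedSpace ℝ F]

theorem norm_sub_le_sub_of_norm_deriv_le_deriv {f f' : ℝ → F} {g g' : ℝ → ℝ} {p q : ℝ}
    (hpq : p ≤ q)
    (hf : ∀ x ∈ Icc p q, HasDerivWithinAt f (f' x) (Icc p q) x)
    (hg : ∀ x ∈ Icc p q, HasDerivWithinAt g (g' x) (Icc p q) x)
    (bound : ∀ x ∈ Ico p q, ‖f' x‖ ≤ g' x) :
    ‖f q - f p‖ ≤ g q - g p := by
  refine image_norm_le_of_norm_deriv_right_le_deriv_boundary' (f := fun x => f x - f p)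
    (B := fun x => g x - g p) (fun x hx => (hf x hx).continuousWithinAt.sub_const _)
    (fun x hx => ?_) (by simp) (fun x hx => (hg x hx).continuousWithinAt.sub_const _)
    (fun x hx => ?_) bound (right_mem_Icc.2 hpq)
  · exact ((hf x (Ico_subset_Icc_self hx)).mono_of_mem_nhdsWithin
      (Icc_mem_nhdsGE_of_mem hx)).sub_const _
  · exact ((hg x (Ico_subset_Icc_self hx)).mono_of_mem_nhdsWithin
      (Icc_mem_nhdsGE_of_mem hx)).sub_const _

theorem HasDerivWithinAt.taylor_remainder {f f' : ℝ → F} {f''x : F} {s : Set ℝ} {x : ℝ}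
    (c : ℝ) (hf : HasDerivWithinAt f (f' x) s x) (hf' : HasDerivWithinAt f' f''x s x) :
    HasDerivWithinAt (fun τ => f c - f τ - (c - τ) • f' τ) ((x - c) • f''x) s x :=
  (((hasDerivWithinAt_const x s (f c)).sub hf).sub
    (((hasDerivWithinAt_id x s).const_sub c).smul hf')).congr_deriv (by simp [sub_smul])

variable {f f' f'' : ℝ → F} {u u' u'' : ℝ → ℝ} {a b : ℝ}

theorem norm_taylor_remainder_le_of_norm_deriv2_le
    (hf : ∀ x ∈ Icc a b, HasDerivWithinAt f (f' x) (Icc a b) x)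
    (hf' : ∀ x ∈ Icc a b, HasDerivWithinAt f' (f'' x) (Icc a b) x)
    (hu : ∀ x ∈ Icc a b, HasDerivWithinAt u (u' x) (Icc a b) x)
    (hu' : ∀ x ∈ Icc a b, HasDerivWithinAt u' (u'' x) (Icc a b) x)
    (bound : ∀ x ∈ Icc a b, ‖f'' x‖ ≤ u'' x) {c t : ℝ} (hc : c ∈ Icc a b)
    (ht : t ∈ Icc a b) :
    ‖f c - f t - (c - t) • f' t‖ ≤ u c - u t - (c - t) * u' t := by
  set Rf := fun τ => f c - f τ - (c - τ) • f' τ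
  set Ru := fun τ => u c - u τ - (c - τ) * u' τ
  have hRf {p q : ℝ} (hp : a ≤ p) (hq : q ≤ b) (x : ℝ) (hx : x ∈ Icc p q) :
      HasDerivWithinAt Rf ((x - c) • f'' x) (Icc p q) x :=
    have hsub : Icc p q ⊆ Icc a b := Icc_subset_Icc hp hq
    ((hf x (hsub hx)).mono hsub).taylor_remainder c ((hf' x (hsub hx)).mono hsub)
  have hRu {p q : ℝ} (hp : a ≤ p) (hq : q ≤ b) (x : ℝ) (hx : x ∈ Icc p q) :
      HasDerivWithinAt Ru ((x - c) * u'' x) (Icc p q) x :=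
    have hsub : Icc p q ⊆ Icc a b := Icc_subset_Icc hp hq
    ((hu x (hsub hx)).mono hsub).taylor_remainder c ((hu' x (hsub hx)).mono hsub)
  have hRf_c : Rf c = 0 := by simp [Rf]
  have hRu_c : Ru c = 0 := by simp [Ru]
  change ‖Rf t‖ ≤ Ru t
  rcases le_total c t with hct | htc
  · have key := norm_sub_le_sub_of_norm_deriv_le_deriv hct (hRf hc.1 ht.2) (hRu hc.1 ht.2)
      fun x hx => by
        rw [norm_smul, Real.norm_of_nonneg (sub_nonneg.2 hx.1)]
        exact mul_le_mul_of_nonneg_left (bound x ⟨hc.1.trans hx.1, hx.2.le.trans ht.2⟩)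
          (sub_nonneg.2 hx.1)
    rwa [hRf_c, hRu_c, sub_zero, sub_zero] at key
  · have key := norm_sub_le_sub_of_norm_deriv_le_deriv htc (hRf ht.1 hc.2)
      (g := fun τ => -Ru τ) (fun x hx => (hRu ht.1 hc.2 x hx).neg) fun x hx => by
        rw [norm_smul, Real.norm_of_nonpos (sub_nonpos.2 hx.2.le), ← neg_mul, neg_sub]
        exact mul_le_mul_of_nonneg_left (bound x ⟨ht.1.trans hx.1, hx.2.le.trans hc.2⟩)
          (sub_nonneg.2 hx.2.le)
    rwa [hRf_c, hRu_c, zero_sub, norm_neg, neg_zero, zero_sub, neg_neg] at key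

theorem norm_sub_lineInterp_le_of_norm_deriv2_le (hab : a < b)
    (hf : ∀ x ∈ Icc a b, HasDerivWithinAt f (f' x) (Icc a b) x)
    (hf' : ∀ x ∈ Icc a b, HasDerivWithinAt f' (f'' x) (Icc a b) x)
    (hu : ∀ x ∈ Icc a b, HasDerivWithinAt u (u' x) (Icc a b) x)
    (hu' : ∀ x ∈ Icc a b, HasDerivWithinAt u' (u'' x) (Icc a b) x)
    (bound : ∀ x ∈ Icc a b, ‖f'' x‖ ≤ u'' x) {t : ℝ} (ht : t ∈ Icc a b) :
    ‖f t - (f a + ((t - a) / (b - a)) • (f b - f a))‖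
      ≤ u a + (t - a) / (b - a) * (u b - u a) - u t := by
  set L := (t - a) / (b - a)
  have hL : L * (b - a) = t - a := div_mul_cancel₀ _ (sub_pos.2 hab).ne'
  have hL0 : 0 ≤ L := div_nonneg (sub_nonneg.2 ht.1) (sub_pos.2 hab).le
  have hL1 : L ≤ 1 := (div_le_one (sub_pos.2 hab)).2 (sub_le_sub_right ht.2 a)
  clear_value L
  have hRa := norm_taylor_remainder_le_of_norm_deriv2_le hf hf' hu hu' bound
    (left_mem_Icc.2 hab.le) ht
  have hRb := norm_taylor_remainder_le_of_norm_deriv2_le hf hf' hu hu' bound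
    (right_mem_Icc.2 hab.le) ht
  -- the first-order terms cancel since `(1 - L) * (a - t) + L * (b - t) = 0`
  have hsplit : f t - (f a + L • (f b - f a))
      = -((1 - L) • (f a - f t - (a - t) • f' t) + L • (f b - f t - (b - t) • f' t)) := by
    linear_combination (norm := module) (-hL) • f' t
  calc ‖f t - (f a + L • (f b - f a))‖
      ≤ (1 - L) * ‖f a - f t - (a - t) • f' t‖ + L * ‖f b - f t - (b - t) • f' t‖ := by
        rw [hsplit, norm_neg]
        refine (norm_add_le _ _).trans_eq ?_
        rw [norm_smul, norm_smul, Real.norm_of_nonneg (sub_nonneg.2 hL1), Real.norm_of_nonneg hL0]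
    _ ≤ (1 - L) * (u a - u t - (a - t) * u' t) + L * (u b - u t - (b - t) * u' t) := by
        gcongr
    _ = u a + L * (u b - u a) - u t := by
        linear_combination (-u' t) * hL

end Interpolation

section LinearODE

variable {E : Type*} [NormedAddCommGroup E] [NormedSpace ℝ E]

theorem norm_comp_add_comp_comp_le {A A' Φ : E →L[ℝ] E} {K K' : ℝ} (hA : ‖A‖ ≤ K)
    (hA' : ‖A'‖ ≤ K') : ‖A'.comp Φ + A.comp (A.comp Φ)‖ ≤ (K' + K ^ 2) * ‖Φ‖ :=
  calc _ ≤ ‖A'‖ * ‖Φ‖ + ‖A‖ * (‖A‖ * ‖Φ‖) :=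
        norm_add_le_of_le (ContinuousLinearMap.opNorm_comp_le _ _)
          ((ContinuousLinearMap.opNorm_comp_le _ _).trans
            (by gcongr; exact ContinuousLinearMap.opNorm_comp_le _ _))
    _ ≤ K' * ‖Φ‖ + K * (K * ‖Φ‖) := by
        have := (norm_nonneg A).trans hA
        gcongr
    _ = (K' + K ^ 2) * ‖Φ‖ := by ring

theorem norm_le_mul_exp_of_hasDerivWithinAt_comp {A Φ : ℝ → E →L[ℝ] E} {K a b : ℝ}
    (hΦ : ∀ x ∈ Icc a b, HasDerivWithinAt Φ ((A x).comp (Φ x)) (Icc a b) x)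
    (hA : ∀ x ∈ Icc a b, ‖A x‖ ≤ K) {x : ℝ} (hx : x ∈ Icc a b) :
    ‖Φ x‖ ≤ ‖Φ a‖ * Real.exp (K * (x - a)) := by
  have := norm_le_gronwallBound_of_norm_deriv_right_le (ε := 0)
    (fun x hx => (hΦ x hx).continuousWithinAt)
    (fun x hx => (hΦ x (Ico_subset_Icc_self hx)).mono_of_mem_nhdsWithin
      (Icc_mem_nhdsGE_of_mem hx))
    le_rfl (fun x hx => (ContinuousLinearMap.opNorm_comp_le _ _).trans <| by
      rw [add_zero]; gcongr; exact hA x (Ico_subset_Icc_self hx)) x hx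
  rwa [gronwallBound_ε0] at this

end LinearODE

theorem transition_matrix_interpolation_bound_general {E : Type*} [NormedAddCommGroup E]
    [NormedSpace ℝ E]
    (t₀ tf MA MdA : ℝ) (A A' : ℝ → E →L[ℝ] E) (φ : ℝ → ℝ → E →L[ℝ] E)
    (hA' : ∀ t ∈ Set.Icc t₀ tf, HasDerivWithinAt A (A' t) (Set.Icc t₀ tf) t)
    (hMA : 0 < MA)
    (hA_bound : ∀ t ∈ Set.Icc t₀ tf, ‖A t‖ ≤ MA)
    (hA'_bound : ∀ t ∈ Set.Icc t₀ tf, ‖A' t‖ ≤ MdA)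
    (hode : ∀ s ∈ Set.Icc t₀ tf, ∀ t ∈ Set.Icc t₀ tf,
      HasDerivWithinAt (fun τ => φ τ s) ((A t).comp (φ t s)) (Set.Icc t₀ tf) t)
    (hinit : ∀ s ∈ Set.Icc t₀ tf, φ s s = ContinuousLinearMap.id ℝ E)
    (a b : ℝ) (ha : a ∈ Set.Icc t₀ tf) (hb : b ∈ Set.Icc t₀ tf) (hab : a < b) :
    ∀ t ∈ Set.Icc a b,
      ‖φ t a - (ContinuousLinearMap.id ℝ E
          + ((t - a) / (b - a)) • (φ b a - ContinuousLinearMap.id ℝ E))‖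
        ≤ ((t - a) / (b - a)) *
            ((Real.exp ((b - a) * MA) - 1 - (b - a) * MA) * (1 + MdA / MA ^ 2)) := by
  intro t ht
  have hsub : Icc a b ⊆ Icc t₀ tf := Icc_subset_Icc ha.1 hb.2
  set κ := 1 + MdA / MA ^ 2
  have hMdA : 0 ≤ MdA := (norm_nonneg _).trans (hA'_bound a ha)
  have hκ : 0 ≤ κ := by positivity
  have hφ x (hx : x ∈ Icc a b) := (hode a ha x (hsub hx)).mono hsub
  have hφ' x (hx : x ∈ Icc a b) := ((hA' x (hsub hx)).mono hsub).clm_comp (hφ x hx)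
  have hgrowth x (hx : x ∈ Icc a b) : ‖φ x a‖ ≤ Real.exp (MA * (x - a)) := by
    refine (norm_le_mul_exp_of_hasDerivWithinAt_comp hφ (fun y hy => hA_bound y (hsub hy))
      hx).trans ?_
    rw [hinit a ha]
    exact mul_le_of_le_one_left (Real.exp_pos _).le ContinuousLinearMap.norm_id_le
  have hφ''_bound x (hx : x ∈ Icc a b) :
      ‖(A' x).comp (φ x a) + (A x).comp ((A x).comp (φ x a))‖
        ≤ κ * MA * MA * Real.exp (MA * (x - a)) := by
    refine (norm_comp_add_comp_comp_le (hA_bound x (hsub hx)) (hA'_bound x (hsub hx))).trans ?_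
    rw [show κ * MA * MA = MdA + MA ^ 2 by simp only [κ]; field_simp; ring]
    gcongr
    exact hgrowth x hx
  have hmajorant (c x : ℝ) : HasDerivWithinAt (fun τ => c * Real.exp (MA * (τ - a)))
      (c * MA * Real.exp (MA * (x - a))) (Icc a b) x :=
    ((((hasDerivAt_id x).sub_const a).const_mul MA).exp.const_mul c).hasDerivWithinAt.congr_deriv
      (by simp only [id_eq, mul_one]; ring)
  have key := norm_sub_lineInterp_le_of_norm_deriv2_le hab hφ hφ' (fun x _ => hmajorant κ x)
    (fun x _ => hmajorant (κ * MA) x) hφ''_bound ht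
  rw [hinit a ha] at key
  refine key.trans ?_
  have hL : (t - a) / (b - a) * (b - a) = t - a := div_mul_cancel₀ _ (sub_pos.2 hab).ne'
  have hexp_ge := mul_le_mul_of_nonneg_left (Real.add_one_le_exp (MA * (t - a))) hκ
  rw [sub_self, mul_zero, Real.exp_zero, mul_one, mul_comm (b - a) MA]
  linear_combination hexp_ge + κ * MA * hL

theorem transition_matrix_interpolation_bound {E : Type*} [NormedAddCommGroup E]
    [NormedSpace ℝ E]
    (t₀ tf MA MdA : ℝ) (A A' : ℝ → E →L[ℝ] E) (φ : ℝ → ℝ → E →L[ℝ] E)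
    (hA' : ∀ t ∈ Set.Icc t₀ tf, HasDerivWithinAt A (A' t) (Set.Icc t₀ tf) t)
    (hA'c : ContinuousOn A' (Set.Icc t₀ tf))
    (hMA : 0 < MA)
    (hA_bound : ∀ t ∈ Set.Icc t₀ tf, ‖A t‖ ≤ MA)
    (hA'_bound : ∀ t ∈ Set.Icc t₀ tf, ‖A' t‖ ≤ MdA)
    (hode : ∀ s ∈ Set.Icc t₀ tf, ∀ t ∈ Set.Icc t₀ tf,
      HasDerivWithinAt (fun τ => φ τ s) ((A t).comp (φ t s)) (Set.Icc t₀ tf) t)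
    (hinit : ∀ s ∈ Set.Icc t₀ tf, φ s s = ContinuousLinearMap.id ℝ E)
    (a b : ℝ) (ha : a ∈ Set.Icc t₀ tf) (hb : b ∈ Set.Icc t₀ tf) (hab : a < b) :
    ∀ t ∈ Set.Icc a b,
      ‖φ t a - (ContinuousLinearMap.id ℝ E
          + ((t - a) / (b - a)) • (φ b a - ContinuousLinearMap.id ℝ E))‖
        ≤ ((t - a) / (b - a)) *
            ((Real.exp ((b - a) * MA) - 1 - (b - a) * MA) * (1 + MdA / MA ^ 2)) :=
  transition_matrix_interpolation_bound_general t₀ tf MA MdA A A' φ hA' hMA hA_bound hA'_bound hode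
    hinit a b ha hb hab
end
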